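/- Every H-polyhedron A ⊆ ℝᵈ is a V-polyhedron: there exist a finite set of points Y ⊆ ℝᵈ and a finite set of vectors V ⊆ ℝᵈ such that A = conv(Y) + cone(V). -/

import Mathlib

/-!
Homogenize: `x ∈ A` iff `(x, 1)` lies in the cone `K = {(x, t) | 0 ≤ t, ⟪a i, x⟫ ≤ b i * t}`
of `ℝᵈ × ℝ`. Fourier–Motzkin elimination shows that cutting a finitely generated cone by a
half-space through the origin leaves a finitely generated cone; starting from the whole space,
generated by `± eᵢ`, this makes `K` finitely generated. The generators `(y, t)` of `K` with
`t > 0`, rescaled to `t = 1`, give the points `Y`, and those with `t = 0` the directions `V`.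
-/

open RealInnerProductSpace Pointwise

/-- The cone (set of nonnegative linear combinations) generated by the vectors
`v 0, …, v (q-1)`. -/
def coneOf {d q : ℕ} (v : Fin q → EuclideanSpace ℝ (Fin d)) :
    Set (EuclideanSpace ℝ (Fin d)) :=
  {x | ∃ μ : Fin q → ℝ, (∀ j, 0 ≤ μ j) ∧ x = ∑ j, μ j • v j}

/-- An `H`-polyhedron: a finite intersection of closed half-spaces
`{x | ⟪a, x⟫ ≤ b}` (the empty intersection, i.e. `ℝᵈ`, is allowed). -/
def IsHPolyhedron {d : ℕ} (A : Set (EuclideanSpace ℝ (Fin d))) : Prop :=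
  ∃ (p : ℕ) (a : Fin p → EuclideanSpace ℝ (Fin d)) (b : Fin p → ℝ),
    A = ⋂ i, {x : EuclideanSpace ℝ (Fin d) | ⟪a i, x⟫ ≤ b i}

open Set PointedCone

section

variable {𝕜 E : Type*} [Field 𝕜] [AddCommGroup E] [Module 𝕜 E]

/-- Bilinear, so that pairing two elements of cones lands in the cone generated by the
pairings of their generators (`Submodule.map₂_span_span`). -/
def LinearMap.eliminate (f : E →ₗ[𝕜] 𝕜) : E →ₗ[𝕜] E →ₗ[𝕜] E :=
  LinearMap.mk₂ 𝕜 (fun u w => f u • w - f w • u)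
    (fun u u' w => by simp only [map_add]; module)
    (fun c u w => by simp only [map_smul, smul_eq_mul]; module)
    (fun u w w' => by simp only [map_add]; module)
    (fun c u w => by simp only [map_smul, smul_eq_mul]; module)

@[simp]
lemma LinearMap.eliminate_apply (f : E →ₗ[𝕜] 𝕜) (u w : E) :
    f.eliminate u w = f u • w - f w • u :=
  rfl

variable [LinearOrder 𝕜]

def fourierMotzkin (f : E →ₗ[𝕜] 𝕜) (s : Set E) : Set E :=
  {v ∈ s | f v ≤ 0} ∪ image2 (fun u w => f.eliminate u w) {u ∈ s | 0 < f u} {w ∈ s | f w < 0}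

lemma Set.Finite.fourierMotzkin {s : Set E} (hs : s.Finite) (f : E →ₗ[𝕜] 𝕜) :
    (_root_.fourierMotzkin f s).Finite :=
  (hs.sep _).union ((hs.sep _).image2 _ (hs.sep _))

variable [IsStrictOrderedRing 𝕜]

namespace PointedCone

lemma apply_nonpos_of_mem_hull {f : E →ₗ[𝕜] 𝕜} {s : Set E} (hs : ∀ u ∈ s, f u ≤ 0) {x : E}
    (hx : x ∈ hull 𝕜 s) : f x ≤ 0 := by
  have : hull 𝕜 s ≤ (positive 𝕜 𝕜).comap (-f) :=
    Submodule.span_le.2 fun u hu => by simpa using hs u hu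
  simpa using this hx

lemma eq_zero_or_pos_of_mem_hull {f : E →ₗ[𝕜] 𝕜} {x : E} (hx : x ∈ hull 𝕜 {u | 0 < f u}) :
    x = 0 ∨ 0 < f x := by
  induction hx using Submodule.span_induction with
  | mem u hu => exact Or.inr hu
  | zero => exact Or.inl rfl
  | add u w _ _ hu hw =>
    rcases hu with rfl | hu <;> rcases hw with rfl | hw <;> simp_all [add_pos]
  | smul c u _ hu =>
    obtain ⟨c, hc⟩ := c
    rcases hu with rfl | hu
    · simp
    rcases hc.eq_or_lt with rfl | hc
    · simp
    · right
      simpa using mul_pos hc hu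

lemma hull_fourierMotzkin_subset (f : E →ₗ[𝕜] 𝕜) (s : Set E) :
    (hull 𝕜 (fourierMotzkin f s) : Set E) ⊆ (hull 𝕜 s : Set E) ∩ {x | f x ≤ 0} := by
  intro x hx
  refine ⟨Submodule.span_le.2 ?_ hx, apply_nonpos_of_mem_hull ?_ hx⟩
  · rintro _ (⟨hv, -⟩ | ⟨u, hu, w, hw, rfl⟩)
    · exact subset_hull hv
    · show f u • w - f w • u ∈ hull 𝕜 s
      rw [sub_eq_add_neg, ← neg_smul]
      exact add_mem (smul_mem _ hu.2.le (subset_hull hw.1))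
        (smul_mem _ (neg_nonneg.2 hw.2.le) (subset_hull hu.1))
  · rintro _ (⟨-, hv⟩ | ⟨u, -, w, -, rfl⟩)
    · exact hv
    · simp [mul_comm]

lemma inter_setOf_nonpos_subset_hull_fourierMotzkin (f : E →ₗ[𝕜] 𝕜) (s : Set E) :
    (hull 𝕜 s : Set E) ∩ {x | f x ≤ 0} ⊆ hull 𝕜 (fourierMotzkin f s) := by
  set P := {u ∈ s | 0 < f u}
  set M := {w ∈ s | f w ≤ 0}
  have hM : hull 𝕜 M ≤ hull 𝕜 (fourierMotzkin f s) := Submodule.span_mono subset_union_left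
  have hPM : image2 (fun u w => f.eliminate u w) P M ⊆ hull 𝕜 (fourierMotzkin f s) := by
    rintro _ ⟨u, hu, w, hw, rfl⟩
    rcases hw.2.lt_or_eq with hw' | hw'
    · exact subset_hull (Or.inr ⟨u, hu, w, ⟨hw.1, hw'⟩, rfl⟩)
    · simpa [hw'] using smul_mem _ hu.2.le (hM (subset_hull hw))
  rintro x ⟨hx, hfx⟩
  have hs : s ⊆ P ∪ M := fun u hu => (lt_or_ge 0 (f u)).imp (⟨hu, ·⟩) (⟨hu, ·⟩)
  obtain ⟨p, hp, m, hm, rfl⟩ :=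
    Submodule.mem_sup.1 ((Submodule.span_union P M).le (Submodule.span_mono hs hx))
  have hfm : f m ≤ 0 := apply_nonpos_of_mem_hull (fun w hw => hw.2) hm
  rcases eq_zero_or_pos_of_mem_hull (Submodule.span_mono (sep_subset_ofPred _ _) hp)
    with rfl | hfp
  · simpa using hM hm
  have hfpm : f p ≤ -f m := by simp only [mem_ofPred_eq, map_add] at hfx; linarith
  have hfm' : 0 < -f m := hfp.trans_le hfpm
  -- As `f p ≤ -f m`, the elimination of `p` against `m` absorbs all of `p` and part of `m`.
  have key : p + m = (1 - f p / -f m) • m + (-f m)⁻¹ • f.eliminate p m := by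
    have : f m ≠ 0 := by linarith
    simp only [LinearMap.eliminate_apply]
    match_scalars <;> field_simp; ring
  rw [SetLike.mem_coe, key]
  refine add_mem (smul_mem _ (sub_nonneg.2 ((div_le_one hfm').2 hfpm)) (hM hm))
    (smul_mem _ (by positivity) ?_)
  have := Submodule.apply_mem_map₂
    (f.eliminate.restrictScalars₁₂ {c : 𝕜 // 0 ≤ c} {c : 𝕜 // 0 ≤ c}) hp hm
  rw [Submodule.map₂_span_span] at this
  exact Submodule.span_le.2 hPM this

theorem hull_inter_setOf_nonpos (f : E →ₗ[𝕜] 𝕜) (s : Set E) :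
    (hull 𝕜 s : Set E) ∩ {x | f x ≤ 0} = hull 𝕜 (fourierMotzkin f s) :=
  (inter_setOf_nonpos_subset_hull_fourierMotzkin f s).antisymm (hull_fourierMotzkin_subset f s)

lemma fst_mem_convexHull_of_mem_hull {S : Set (E × 𝕜)} (hS : ∀ z ∈ S, 0 < z.2) {z : E × 𝕜}
    (hz : z ∈ hull 𝕜 S) (hz1 : z.2 = 1) :
    z.1 ∈ convexHull 𝕜 ((fun w => w.2⁻¹ • w.1) '' S) := by
  obtain ⟨c, hcS, hc0, rfl⟩ := mem_hull_set.1 hz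
  simp only [Finsupp.sum, Prod.fst_sum, Prod.snd_sum, Prod.smul_fst, Prod.smul_snd,
    smul_eq_mul] at hz1 ⊢
  have : ∑ w ∈ c.support, c w • w.1 = ∑ w ∈ c.support, (c w * w.2) • (w.2⁻¹ • w.1) :=
    Finset.sum_congr rfl fun w hw => by
      rw [smul_smul, mul_assoc, mul_inv_cancel₀ (hS w (hcS hw)).ne', mul_one]
  rw [this]
  exact (convex_convexHull 𝕜 _).sum_mem (fun w hw => mul_nonneg (hc0 w) (hS w (hcS hw)).le) hz1
    fun w hw => subset_convexHull 𝕜 _ (mem_image_of_mem _ (hcS hw))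

lemma mk_one_mem_hull_of_mem_convexHull {S : Set (E × 𝕜)} {x : E}
    (hx : x ∈ convexHull 𝕜 ((fun z => z.2⁻¹ • z.1) '' {z ∈ S | 0 < z.2})) :
    (x, 1) ∈ hull 𝕜 S := by
  refine convexHull_min (t := {p | (p, (1 : 𝕜)) ∈ hull 𝕜 S}) ?_ ?_ hx
  · rintro _ ⟨z, ⟨hz, hz0⟩, rfl⟩
    have : (z.2⁻¹ • z.1, (1 : 𝕜)) = z.2⁻¹ • z := by ext <;> simp [hz0.ne']
    rw [mem_ofPred_eq, this]
    exact smul_mem _ (inv_nonneg.2 hz0.le) (subset_hull hz)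
  · intro p hp q hq a b ha hb hab
    have : (a • p + b • q, (1 : 𝕜)) = a • (p, 1) + b • (q, 1) := by ext <;> simp [hab]
    rw [mem_ofPred_eq, this]
    exact (hull 𝕜 S).convex hp hq ha hb hab

theorem mk_one_mem_hull_iff {S : Set (E × 𝕜)} (hS : ∀ z ∈ S, 0 ≤ z.2) {x : E} :
    (x, 1) ∈ hull 𝕜 S ↔ x ∈ convexHull 𝕜 ((fun z => z.2⁻¹ • z.1) '' {z ∈ S | 0 < z.2}) +
      hull 𝕜 (Prod.fst '' {z ∈ S | z.2 = 0}) := by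
  constructor
  · intro h
    have hsplit : S ⊆ {z ∈ S | 0 < z.2} ∪ {z ∈ S | z.2 = 0} := fun z hz =>
      (hS z hz).lt_or_eq.imp (⟨hz, ·⟩) fun h => ⟨hz, h.symm⟩
    obtain ⟨zp, hp, z0, h0, hz⟩ :=
      Submodule.mem_sup.1 ((Submodule.span_union _ _).le (Submodule.span_mono hsplit h))
    have hz0 : z0.2 = 0 := LinearMap.mem_ker.1
      ((Submodule.span_le (p := LinearMap.ker ((LinearMap.snd 𝕜 E 𝕜).restrictScalars _))).2
        (fun z hz => hz.2) h0)
    refine ⟨zp.1, fst_mem_convexHull_of_mem_hull (fun z hz => hz.2) hp ?_, z0.1, ?_, ?_⟩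
    · simpa [hz0] using congrArg Prod.snd hz
    · have := Submodule.mem_map_of_mem
        (f := (LinearMap.fst 𝕜 E 𝕜).restrictScalars {c : 𝕜 // 0 ≤ c}) h0
      rwa [Submodule.map_span] at this
    · simpa using congrArg Prod.fst hz
  · intro hx
    obtain ⟨p, hp, v, hv, rfl⟩ := Set.mem_add.1 hx
    have hsplit : (p + v, (1 : 𝕜)) = (p, 1) + (v, 0) := by simp
    rw [hsplit]
    refine add_mem (mk_one_mem_hull_of_mem_convexHull hp) ?_
    have := Submodule.mem_map_of_mem
      (f := (LinearMap.inl 𝕜 E 𝕜).restrictScalars {c : 𝕜 // 0 ≤ c}) hv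
    rw [Submodule.map_span] at this
    refine Submodule.span_le.2 ?_ this
    rintro _ ⟨_, ⟨z, ⟨hz, hz0⟩, rfl⟩, rfl⟩
    exact subset_hull (by simpa [← hz0] using hz)

variable [FiniteDimensional 𝕜 E]

lemma exists_finite_hull_eq_univ : ∃ s : Set E, s.Finite ∧ (hull 𝕜 s : Set E) = univ := by
  let e := Module.finBasis 𝕜 E
  refine ⟨range e ∪ range (-⇑e), (finite_range _).union (finite_range _),
    eq_univ_of_forall fun x => ?_⟩
  rw [← e.sum_repr x]
  refine sum_mem fun i _ => ?_
  rcases le_total 0 (e.repr x i) with h | h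
  · exact smul_mem _ h (subset_hull (Or.inl ⟨i, rfl⟩))
  · rw [← neg_smul_neg]
    exact smul_mem _ (neg_nonneg.2 h) (subset_hull (Or.inr ⟨i, rfl⟩))

theorem exists_finite_hull_eq_setOf_forall_nonpos {ι : Type*} [Finite ι]
    (g : ι → E →ₗ[𝕜] 𝕜) : ∃ s : Set E, s.Finite ∧ (hull 𝕜 s : Set E) = {x | ∀ i, g i x ≤ 0} := by
  classical
  cases nonempty_fintype ι
  suffices ∀ t : Finset ι, ∃ s : Set E, s.Finite ∧
      (hull 𝕜 s : Set E) = {x | ∀ i ∈ t, g i x ≤ 0} by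
    simpa using this Finset.univ
  intro t
  induction t using Finset.induction_on with
  | empty => simpa using exists_finite_hull_eq_univ
  | insert i t _ ih =>
    obtain ⟨s, hs, hst⟩ := ih
    refine ⟨fourierMotzkin (g i) s, hs.fourierMotzkin _, ?_⟩
    rw [← hull_inter_setOf_nonpos, hst]
    ext x
    simp [and_comm]

theorem exists_finite_eq_convexHull_add_hull {ι : Type*} [Finite ι] (f : ι → E →ₗ[𝕜] 𝕜)
    (b : ι → 𝕜) : ∃ Y V : Set E, Y.Finite ∧ V.Finite ∧
      {x | ∀ i, f i x ≤ b i} = convexHull 𝕜 Y + hull 𝕜 V := by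
  obtain ⟨S, hS, hSK⟩ := exists_finite_hull_eq_setOf_forall_nonpos (E := E × 𝕜)
    fun o : Option ι => o.elim (-LinearMap.snd 𝕜 E 𝕜)
      fun i => (f i).comp (LinearMap.fst 𝕜 E 𝕜) - b i • LinearMap.snd 𝕜 E 𝕜
  have hK : ∀ z, z ∈ hull 𝕜 S ↔ 0 ≤ z.2 ∧ ∀ i, f i z.1 ≤ b i * z.2 := fun z => by
    rw [← SetLike.mem_coe, hSK]
    simp [Option.forall]
  refine ⟨(fun z => z.2⁻¹ • z.1) '' {z ∈ S | 0 < z.2}, Prod.fst '' {z ∈ S | z.2 = 0},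
    (hS.sep _).image _, (hS.sep _).image _, ?_⟩
  ext x
  rw [mem_ofPred_eq, ← mk_one_mem_hull_iff fun z hz => ((hK z).1 (subset_hull hz)).1, hK]
  simp

end PointedCone

end

lemma coneOf_eq_hull {d q : ℕ} (v : Fin q → EuclideanSpace ℝ (Fin d)) :
    coneOf v = hull ℝ (range v) := by
  ext x
  rw [SetLike.mem_coe, Submodule.mem_span_range_iff_exists_fun]
  constructor
  · rintro ⟨μ, hμ, rfl⟩
    exact ⟨fun j => ⟨μ j, hμ j⟩, rfl⟩
  · rintro ⟨c, rfl⟩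
    exact ⟨fun j => c j, fun j => (c j).2, rfl⟩

/-- Every `H`-polyhedron is a `V`-polyhedron: it can be written as
`conv(Y) + cone(V)` for finite sets `Y` of points and `V` of vectors. -/
theorem hPolyhedron_is_vPolyhedron (d : ℕ) (A : Set (EuclideanSpace ℝ (Fin d)))
    (hA : IsHPolyhedron A) :
    ∃ (p q : ℕ) (y : Fin p → EuclideanSpace ℝ (Fin d))
      (v : Fin q → EuclideanSpace ℝ (Fin d)),
      A = convexHull ℝ (Set.range y) + coneOf v := by
  obtain ⟨p, a, b, rfl⟩ := hA
  obtain ⟨Y, V, hY, hV, hYV⟩ :=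
    exists_finite_eq_convexHull_add_hull (fun i => innerₛₗ ℝ (a i)) b
  obtain ⟨n, y, -, rfl⟩ := hY.fin_param
  obtain ⟨q, v, -, rfl⟩ := hV.fin_param
  refine ⟨n, q, y, v, ?_⟩
  rw [coneOf_eq_hull, ← hYV]
  ext x
  simp
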